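/- The series H satisfies the functional equation (v - 1 - tv(1-u))·H(u,v,z,t) = tz(v-1) + t(z(v-1) - v)·H(u,1,z,t) + t·u·v^2·H(uv,1,z,t), where H(u,1,z,t) is H with v specialized to 1 and H(uv,1,z,t) is H(u,1,z,t) with u replaced by the product uv. -/

import Mathlib

/-!
An ascent sequence of length `n + 2` arises uniquely by appending an entry `x ≤ asc w + 1` to an
ascent sequence `w` of length `n + 1`; with `y` the last entry of `w`, the new entry creates an
ascent iff `y < x` and a zero iff `x = 0`. Multiplied by `v - 1`, the geometric sums over
`1 ≤ x ≤ y` and `y < x ≤ asc w + 1` telescope to `z(v-1) - v + (1-u) v^(y+1) + u v^(asc w + 2)`,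
times `t` and the weight of `w`. Summing over `w` by length, the factors `v^y`, `1` and `v^(asc w)`
produce `H`, `H(u,1)` and `H(uv,1)`, and the sequence `(0)` contributes `tz`.
-/

/-- Number of ascents of a finite sequence of naturals. -/
def ascents (l : List ℕ) : ℕ := (l.zip l.tail).countP fun p => decide (p.1 < p.2)

/-- `l` is an ascent sequence: `x₁ = 0` and `xᵢ ∈ [0, 1 + asc(x₁,…,x_{i-1})]`.
The empty sequence is an ascent sequence. -/
def IsAscentSeq (l : List ℕ) : Prop :=
  ∀ i (h : i < l.length), l.get ⟨i, h⟩ ≤ if i = 0 then 0 else ascents (l.take i) + 1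

/-- The number of 0's to the left of the leftmost nonzero entry
(0 if there is no nonzero entry). -/
def runZeros (l : List ℕ) : ℕ :=
  if l.all (· == 0) then 0 else (l.takeWhile (· == 0)).length

open MvPowerSeries

/-- The variable `t` in `ℚ⟦t,u,v,z⟧`. -/
noncomputable def T : MvPowerSeries (Fin 4) ℚ := X 0
/-- The variable `u` in `ℚ⟦t,u,v,z⟧`. -/
noncomputable def U : MvPowerSeries (Fin 4) ℚ := X 1
/-- The variable `v` in `ℚ⟦t,u,v,z⟧`. -/
noncomputable def V : MvPowerSeries (Fin 4) ℚ := X 2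
/-- The variable `z` in `ℚ⟦t,u,v,z⟧`. -/
noncomputable def Z : MvPowerSeries (Fin 4) ℚ := X 3

/-- `H(u,v,z,t) = Σ_w u^{asc(w)} v^{last(w)} z^{zeros(w)} t^{length(w)}` over all
nonempty ascent sequences `w`. -/
noncomputable def H : MvPowerSeries (Fin 4) ℚ :=
  fun d => (Nat.card {l : List ℕ // IsAscentSeq l ∧ l ≠ [] ∧ l.length = d 0 ∧
    ascents l = d 1 ∧ l.getLast? = some (d 2) ∧ l.count 0 = d 3} : ℚ)

/-- `H(u,1,z,t)` : the series `H` with `v` specialized to `1`. -/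
noncomputable def HOne : MvPowerSeries (Fin 4) ℚ :=
  fun d => if d 2 = 0 then
    (Nat.card {l : List ℕ // IsAscentSeq l ∧ l ≠ [] ∧ l.length = d 0 ∧
      ascents l = d 1 ∧ l.count 0 = d 3} : ℚ)
  else 0

/-- `H(uv,1,z,t)` : the series `H(u,1,z,t)` with `u` replaced by the product `uv`. -/
noncomputable def HUV : MvPowerSeries (Fin 4) ℚ :=
  fun d => if d 1 = d 2 then
    (Nat.card {l : List ℕ // IsAscentSeq l ∧ l ≠ [] ∧ l.length = d 0 ∧
      ascents l = d 1 ∧ l.count 0 = d 3} : ℚ)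
  else 0

open Finset

lemma ascents_cons_cons (a b : ℕ) (w : List ℕ) :
    ascents (a :: b :: w) = ascents (b :: w) + if a < b then 1 else 0 := by
  simp [ascents, List.countP_cons]

lemma ascents_append_singleton {w : List ℕ} {y : ℕ} (hy : w.getLast? = some y) (x : ℕ) :
    ascents (w ++ [x]) = ascents w + if y < x then 1 else 0 := by
  induction w with
  | nil => simp at hy
  | cons a w ih =>
    cases w with
    | nil =>
      obtain rfl : a = y := by simpa using hy
      simp [ascents]
    | cons b w =>
      rw [List.getLast?_cons_cons] at hy
      rw [List.cons_append, List.cons_append, ascents_cons_cons, ← List.cons_append, ih hy,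
        ascents_cons_cons]
      ring

lemma ascents_le_ascents_append_singleton (w : List ℕ) (x : ℕ) :
    ascents w ≤ ascents (w ++ [x]) := by
  cases hw : w.getLast? with
  | none => simp_all [ascents]
  | some y => rw [ascents_append_singleton hw]; omega

def nextBound (w : List ℕ) : ℕ := if w = [] then 0 else ascents w + 1

lemma isAscentSeq_nil : IsAscentSeq [] := nofun

lemma isAscentSeq_append_singleton {w : List ℕ} {x : ℕ} :
    IsAscentSeq (w ++ [x]) ↔ IsAscentSeq w ∧ x ≤ nextBound w := by
  have entry (i : ℕ) (hi : i < w.length) : (w ++ [x]).get ⟨i, by simp; omega⟩ = w.get ⟨i, hi⟩ ∧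
      (w ++ [x]).take i = w.take i := by
    simp [List.getElem_append_left hi, List.take_append_of_le_length hi.le]
  have last : (w ++ [x]).get ⟨w.length, by simp⟩ = x ∧ (w ++ [x]).take w.length = w := by simp
  constructor
  · intro h
    refine ⟨fun i hi => ?_, ?_⟩
    · have := h i (by simp; omega)
      rwa [(entry i hi).1, (entry i hi).2] at this
    · have := h w.length (by simp)
      rw [last.1, last.2] at this
      rcases eq_or_ne w [] with rfl | hw
      · simpa [nextBound] using this
      · simpa [nextBound, hw] using this
  · rintro ⟨h, hx⟩ i hi
    rcases lt_or_eq_of_le (Nat.lt_succ_iff.mp (by simpa using hi)) with hi | rfl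
    · rw [(entry i hi).1, (entry i hi).2]; exact h i hi
    · rw [last.1, last.2]
      rcases eq_or_ne w [] with rfl | hw
      · simpa [nextBound] using hx
      · simpa [nextBound, hw] using hx

lemma IsAscentSeq.getLastD_le {w : List ℕ} (hw : IsAscentSeq w) :
    w.getLastD 0 ≤ ascents w + 1 := by
  induction w using List.reverseRecOn with
  | nil => simp
  | append_singleton w x _ =>
    have hx := (isAscentSeq_append_singleton.mp hw).2
    have := ascents_le_ascents_append_singleton w x
    simp only [List.getLastD_concat]
    unfold nextBound at hx
    split_ifs at hx <;> omega

def ascentSeqs : ℕ → Finset (List ℕ)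
  | 0 => {[]}
  | n + 1 => (ascentSeqs n).biUnion fun w => (range (nextBound w + 1)).image (w ++ [·])

lemma mem_ascentSeqs {n : ℕ} {w : List ℕ} : w ∈ ascentSeqs n ↔ IsAscentSeq w ∧ w.length = n := by
  induction n generalizing w with
  | zero =>
    simp only [ascentSeqs, mem_singleton, List.length_eq_zero_iff]
    exact ⟨fun h => ⟨h ▸ isAscentSeq_nil, h⟩, And.right⟩
  | succ n ih =>
    simp only [ascentSeqs, mem_biUnion, mem_image, mem_range, ih]
    constructor
    · rintro ⟨w, ⟨hw, rfl⟩, x, hx, rfl⟩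
      exact ⟨isAscentSeq_append_singleton.mpr ⟨hw, by omega⟩, by simp⟩
    · rintro ⟨hw, hlen⟩
      obtain ⟨w, x, rfl⟩ := (List.eq_nil_or_concat w).resolve_left (by rintro rfl; simp at hlen)
      rw [List.concat_eq_append] at hw hlen ⊢
      rw [isAscentSeq_append_singleton] at hw
      exact ⟨w, ⟨hw.1, by simpa using hlen⟩, x, by omega, rfl⟩

lemma sum_ascentSeqs_succ {M : Type*} [AddCommMonoid M] (f : List ℕ → M) (n : ℕ) :
    ∑ w ∈ ascentSeqs (n + 1), f w =
      ∑ w ∈ ascentSeqs n, ∑ x ∈ range (nextBound w + 1), f (w ++ [x]) := by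
  rw [ascentSeqs, sum_biUnion]
  · exact sum_congr rfl fun w _ => sum_image fun x _ y _ h => by simpa using h
  · intro w _ w' _ hne
    rw [Function.onFun, disjoint_left]
    simp only [mem_image]
    rintro _ ⟨x, _, rfl⟩ ⟨y, _, h⟩
    exact hne (List.append_inj' h rfl).1.symm

section Weight

variable {R : Type*} [CommRing R]

lemma sub_one_mul_sum_range_ite (u v z : R) {y m : ℕ} (hy : y ≤ m) :
    (v - 1) * ∑ x ∈ range (m + 1), (if x = 0 then z else 1) * (if y < x then u else 1) * v ^ x =
      z * (v - 1) - v + (1 - u) * v ^ (y + 1) + u * v ^ (m + 1) := by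
  induction m generalizing y with
  | zero =>
    obtain rfl : y = 0 := Nat.le_zero.mp hy
    simp
    ring
  | succ m ih =>
    rw [sum_range_succ, mul_add, if_neg m.succ_ne_zero]
    rcases Nat.lt_or_eq_of_le hy with hy | rfl
    · rw [ih (Nat.lt_succ_iff.mp hy), if_pos hy]
      ring
    · have hsame :
          ∑ x ∈ range (m + 1), (if x = 0 then z else 1) * (if m + 1 < x then u else 1) * v ^ x =
            ∑ x ∈ range (m + 1), (if x = 0 then z else 1) * (if m < x then u else 1) * v ^ x :=
        sum_congr rfl fun x hx => by
          rw [mem_range] at hx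
          rw [if_neg (show ¬m + 1 < x by omega), if_neg (show ¬m < x by omega)]
      rw [hsame, ih le_rfl, if_neg (lt_irrefl _)]
      ring

variable (t u v z : R)

def weight (w : List ℕ) (k : ℕ) : R := t ^ w.length * u ^ ascents w * v ^ k * z ^ w.count 0

lemma weight_append_singleton {w : List ℕ} (hw : w ≠ []) (x : ℕ) :
    weight t u v z (w ++ [x]) x = t * weight t u v z w 0 *
      ((if x = 0 then z else 1) * (if w.getLastD 0 < x then u else 1) * v ^ x) := by
  rw [weight, weight, ascents_append_singleton (List.getLast?_eq_some_getLast hw) x,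
    List.length_append, List.count_append, List.count_singleton, List.getLastD_eq_getLast?,
    List.getLast?_eq_some_getLast hw, Option.getD_some]
  split_ifs <;> simp_all <;> ring

lemma sub_one_mul_sum_weight_append_singleton {w : List ℕ} (hw : IsAscentSeq w) (hne : w ≠ []) :
    (v - 1) * ∑ x ∈ range (nextBound w + 1), weight t u v z (w ++ [x]) x =
      t * ((z * (v - 1) - v) * weight t u v z w 0 +
        v * (1 - u) * weight t u v z w (w.getLastD 0) +
        u * v ^ 2 * weight t u v z w (ascents w)) := by
  simp_rw [weight_append_singleton t u v z hne, ← mul_sum, nextBound, if_neg hne]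
  rw [mul_left_comm, sub_one_mul_sum_range_ite u v z hw.getLastD_le]
  simp only [weight, pow_add]
  ring

def gradedSum (f : List ℕ → ℕ) (n : ℕ) : R := ∑ w ∈ ascentSeqs n, weight t u v z w (f w)

lemma gradedSum_one (f : List ℕ → ℕ) : gradedSum t u v z f 1 = t * v ^ f [0] * z := by
  simp [gradedSum, ascentSeqs, nextBound, weight, ascents]

lemma sub_one_mul_gradedSum_succ {n : ℕ} (hn : n ≠ 0) :
    (v - 1) * gradedSum t u v z (·.getLastD 0) (n + 1) =
      t * ((z * (v - 1) - v) * gradedSum t u v z (fun _ => 0) n +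
        v * (1 - u) * gradedSum t u v z (·.getLastD 0) n +
        u * v ^ 2 * gradedSum t u v z ascents n) := by
  simp only [gradedSum, sum_ascentSeqs_succ, List.getLastD_concat, mul_sum, ← sum_add_distrib]
  refine sum_congr rfl fun w hw => ?_
  obtain ⟨hw, hlen⟩ := mem_ascentSeqs.mp hw
  rw [← mul_sum, sub_one_mul_sum_weight_append_singleton t u v z hw (by rintro rfl; simp_all)]

end Weight

section Series

open MvPowerSeries WithPiTopology

noncomputable def exponent (w : List ℕ) (k : ℕ) : Fin 4 →₀ ℕ :=
  .single 0 w.length + .single 1 (ascents w) + .single 2 k + .single 3 (w.count 0)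

lemma exponent_eq_iff {w : List ℕ} {k : ℕ} {d : Fin 4 →₀ ℕ} :
    exponent w k = d ↔ w.length = d 0 ∧ ascents w = d 1 ∧ k = d 2 ∧ w.count 0 = d 3 := by
  constructor
  · rintro rfl
    simp [exponent]
  · rintro ⟨h0, h1, h2, h3⟩
    ext i
    fin_cases i <;> simp [exponent, *]

lemma weight_eq_monomial (w : List ℕ) (k : ℕ) :
    weight T U V Z w k = monomial (exponent w k) 1 := by
  simp only [weight, T, U, V, Z, X_pow_eq, monomial_mul_monomial, exponent, mul_one]

noncomputable def ascentSeries (f : List ℕ → ℕ) : MvPowerSeries (Fin 4) ℚ :=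
  fun d => (Nat.card {w : List ℕ // IsAscentSeq w ∧ w ≠ [] ∧ exponent w (f w) = d} : ℚ)

lemma coeff_gradedSum (f : List ℕ → ℕ) (n : ℕ) (d : Fin 4 →₀ ℕ) :
    coeff d (gradedSum T U V Z f n) = #{w ∈ ascentSeqs n | exponent w (f w) = d} := by
  classical
  simp [gradedSum, weight_eq_monomial, coeff_monomial, sum_boole, eq_comm]

lemma hasSum_gradedSum (f : List ℕ → ℕ) :
    HasSum (fun n => gradedSum T U V Z f (n + 1)) (ascentSeries f) := by
  rw [hasSum_iff_hasSum_coeff]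
  intro d
  have off_zero (n : ℕ) (hn : n + 1 ≠ d 0) :
      #{w ∈ ascentSeqs (n + 1) | exponent w (f w) = d} = 0 := by
    refine card_eq_zero.mpr (filter_eq_empty_iff.mpr fun w hw h => hn ?_)
    rw [← (mem_ascentSeqs.mp hw).2, (exponent_eq_iff.mp h).1]
  simp only [coeff_gradedSum]
  change HasSum _ (Nat.card _ : ℚ)
  obtain ⟨m, hm⟩ | h0 : (∃ m, m + 1 = d 0) ∨ d 0 = 0 := by
    rcases d 0 with _ | m
    exacts [Or.inr rfl, Or.inl ⟨m, rfl⟩]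
  · have card_eq : Nat.card {w : List ℕ // IsAscentSeq w ∧ w ≠ [] ∧ exponent w (f w) = d} =
        #{w ∈ ascentSeqs (m + 1) | exponent w (f w) = d} := by
      rw [← Nat.card_eq_finsetCard]
      refine Nat.card_congr (Equiv.subtypeEquivRight fun w => ?_)
      rw [mem_filter, mem_ascentSeqs]
      constructor
      · rintro ⟨hw, -, h⟩
        exact ⟨⟨hw, (exponent_eq_iff.mp h).1.trans hm.symm⟩, h⟩
      · rintro ⟨⟨hw, hlen⟩, h⟩
        exact ⟨hw, List.ne_nil_of_length_eq_add_one hlen, h⟩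
    rw [card_eq]
    exact hasSum_single m fun n hn => by rw [off_zero n (by omega), Nat.cast_zero]
  · have card_eq : Nat.card {w : List ℕ // IsAscentSeq w ∧ w ≠ [] ∧ exponent w (f w) = d} = 0 :=
      Nat.card_eq_zero.mpr <| .inl ⟨fun ⟨w, _, hne, h⟩ =>
        hne (List.length_eq_zero_iff.mp ((exponent_eq_iff.mp h).1.trans h0))⟩
    simp [card_eq, off_zero _ (h0 ▸ Nat.succ_ne_zero _)]

lemma H_eq_ascentSeries : H = ascentSeries (·.getLastD 0) := by
  funext d
  refine congrArg _ (Nat.card_congr (Equiv.subtypeEquivRight fun w => ?_))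
  simp only [exponent_eq_iff]
  constructor
  · rintro ⟨hw, hne, h0, h1, h2, h3⟩
    simp_all [List.getLast?_eq_some_getLast hne]
  · rintro ⟨hw, hne, h0, h1, h2, h3⟩
    simp_all [List.getLast?_eq_some_getLast hne]

lemma HOne_eq_ascentSeries : HOne = ascentSeries (fun _ => 0) := by
  funext d
  simp only [HOne, ascentSeries, exponent_eq_iff]
  split_ifs with h2
  · simp [h2]
  · simp [Ne.symm h2]

lemma HUV_eq_ascentSeries : HUV = ascentSeries ascents := by
  funext d
  simp only [HUV, ascentSeries, exponent_eq_iff]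
  split_ifs with h12
  · simp [h12]
  · rw [eq_comm, Nat.cast_eq_zero, Nat.card_eq_zero]
    exact .inl ⟨fun ⟨_, _, _, _, h1, h2, _⟩ => h12 (h1.symm.trans h2)⟩

lemma sub_one_mul_H :
    (V - 1) * H = T * Z * (V - 1) +
      T * ((Z * (V - 1) - V) * HOne + V * (1 - U) * H + U * V ^ 2 * HUV) := by
  have hH := H_eq_ascentSeries ▸ hasSum_gradedSum (·.getLastD 0)
  have hOne := HOne_eq_ascentSeries ▸ hasSum_gradedSum fun _ => 0
  have hUV := HUV_eq_ascentSeries ▸ hasSum_gradedSum ascents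
  have hTail : HasSum (fun n => (V - 1) * gradedSum T U V Z (·.getLastD 0) (n + 2))
      ((V - 1) * H - T * Z * (V - 1)) := by
    simpa [gradedSum_one, mul_comm] using (hasSum_nat_add_iff' 1).mpr (hH.mul_left (V - 1))
  have hRec : HasSum (fun n => (V - 1) * gradedSum T U V Z (·.getLastD 0) (n + 2))
      (T * ((Z * (V - 1) - V) * HOne + V * (1 - U) * H + U * V ^ 2 * HUV)) := by
    simp_rw [sub_one_mul_gradedSum_succ T U V Z (Nat.succ_ne_zero _)]
    exact (((hOne.mul_left _).add (hH.mul_left _)).add (hUV.mul_left _)).mul_left T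
  linear_combination hTail.unique hRec

end Series

theorem H_functional_equation :
    (V - 1 - T * V * (1 - U)) * H =
      T * Z * (V - 1) + T * (Z * (V - 1) - V) * HOne + T * U * V ^ 2 * HUV := by
  linear_combination sub_one_mul_H
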